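/- arXiv:0707.0925 — 3 statements merged into one kernel-verified Lean document; each statement's English description precedes it below -/
import Mathlib

section
/- Let G be a group containing elements ρᵢ, ρⱼ, B satisfying ρᵢ ρⱼ ρᵢ⁻¹ = ρⱼ⁻¹ B⁻¹ ρⱼ² and ρᵢ B ρᵢ⁻¹ = ρⱼ⁻¹ B⁻¹ ρⱼ. Then ρᵢ (B⁻¹ ρⱼ B ρⱼ⁻¹ B) ρᵢ⁻¹ = B⁻¹, and consequently ρⱼ B ρⱼ⁻¹ = B ρᵢ⁻¹ B⁻¹ ρᵢ B⁻¹. -/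
/-- from ρᵢ ρⱼ ρᵢ⁻¹ = ρⱼ⁻¹ B⁻¹ ρⱼ² and ρᵢ B ρᵢ⁻¹ = ρⱼ⁻¹ B⁻¹ ρⱼ
it follows that ρᵢ (B⁻¹ ρⱼ B ρⱼ⁻¹ B) ρᵢ⁻¹ = B⁻¹ and hence
ρⱼ B ρⱼ⁻¹ = B ρᵢ⁻¹ B⁻¹ ρᵢ B⁻¹. -/
theorem stmt_9 (G : Type*) [Group G] (ρi ρj B : G)
    (h1 : ρi * ρj * ρi⁻¹ = ρj⁻¹ * B⁻¹ * ρj ^ 2)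
    (h2 : ρi * B * ρi⁻¹ = ρj⁻¹ * B⁻¹ * ρj) :
    ρi * (B⁻¹ * ρj * B * ρj⁻¹ * B) * ρi⁻¹ = B⁻¹ ∧
    ρj * B * ρj⁻¹ = B * ρi⁻¹ * B⁻¹ * ρi * B⁻¹ := by
  have hBi : ρi * B⁻¹ * ρi⁻¹ = (ρj⁻¹ * B⁻¹ * ρj)⁻¹ := by rw [← h2]; group
  have hji : ρi * ρj⁻¹ * ρi⁻¹ = (ρj⁻¹ * B⁻¹ * ρj ^ 2)⁻¹ := by rw [← h1]; group
  have first : ρi * (B⁻¹ * ρj * B * ρj⁻¹ * B) * ρi⁻¹ = B⁻¹ := by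
    calc ρi * (B⁻¹ * ρj * B * ρj⁻¹ * B) * ρi⁻¹
        = (ρi * B⁻¹ * ρi⁻¹) * (ρi * ρj * ρi⁻¹) * (ρi * B * ρi⁻¹) *
          (ρi * ρj⁻¹ * ρi⁻¹) * (ρi * B * ρi⁻¹) := by group
      _ = (ρj⁻¹ * B⁻¹ * ρj)⁻¹ * (ρj⁻¹ * B⁻¹ * ρj ^ 2) * (ρj⁻¹ * B⁻¹ * ρj) *
          (ρj⁻¹ * B⁻¹ * ρj ^ 2)⁻¹ * (ρj⁻¹ * B⁻¹ * ρj) := by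
            rw [hBi, h1, h2, hji]
      _ = B⁻¹ := by group
  refine ⟨first, ?_⟩
  have hX : B⁻¹ * ρj * B * ρj⁻¹ * B = ρi⁻¹ * B⁻¹ * ρi := by
    conv_rhs => rw [← first]
    group
  calc ρj * B * ρj⁻¹ = B * (B⁻¹ * ρj * B * ρj⁻¹ * B) * B⁻¹ := by group
    _ = B * (ρi⁻¹ * B⁻¹ * ρi) * B⁻¹ := by rw [hX]
    _ = B * ρi⁻¹ * B⁻¹ * ρi * B⁻¹ := by group
end

section
/- Let G be a group containing elements ρᵢ, ρⱼ, B satisfying ρᵢ ρⱼ ρᵢ⁻¹ = ρⱼ⁻¹ B⁻¹ ρⱼ² and ρᵢ B ρᵢ⁻¹ = ρⱼ⁻¹ B⁻¹ ρⱼ. Then ρⱼ ρᵢ ρⱼ⁻¹ = ρᵢ B⁻¹. -/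
/-- from ρᵢ ρⱼ ρᵢ⁻¹ = ρⱼ⁻¹ B⁻¹ ρⱼ² and ρᵢ B ρᵢ⁻¹ = ρⱼ⁻¹ B⁻¹ ρⱼ
it follows that ρⱼ ρᵢ ρⱼ⁻¹ = ρᵢ B⁻¹. -/
theorem stmt_10 (G : Type*) [Group G] (ρi ρj B : G)
    (h1 : ρi * ρj * ρi⁻¹ = ρj⁻¹ * B⁻¹ * ρj ^ 2)
    (h2 : ρi * B * ρi⁻¹ = ρj⁻¹ * B⁻¹ * ρj) :
    ρj * ρi * ρj⁻¹ = ρi * B⁻¹ := by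
  have h3 : ρi * ρj * ρi⁻¹ = (ρi * B * ρi⁻¹) * ρj := by
    rw [h2, h1, sq, ← mul_assoc]
  have h4 : ρj * ρi⁻¹ = B * ρi⁻¹ * ρj := by
    apply mul_left_cancel (a := ρi)
    calc ρi * (ρj * ρi⁻¹) = ρi * ρj * ρi⁻¹ := by group
      _ = ρi * B * ρi⁻¹ * ρj := h3
      _ = ρi * (B * ρi⁻¹ * ρj) := by group
  have h5 : ρj * ρi⁻¹ * ρj⁻¹ = B * ρi⁻¹ := by
    rw [h4]; group
  calc ρj * ρi * ρj⁻¹ = (ρj * ρi⁻¹ * ρj⁻¹)⁻¹ := by group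
    _ = (B * ρi⁻¹)⁻¹ := by rw [h5]
    _ = ρi * B⁻¹ := by group
end

section
/- Let G be a group containing elements ρᵢ, ρⱼ, B satisfying ρᵢ ρⱼ ρᵢ⁻¹ = ρⱼ⁻¹ B⁻¹ ρⱼ² and ρᵢ B ρᵢ⁻¹ = ρⱼ⁻¹ B⁻¹ ρⱼ. Then ρⱼ⁻¹ ρᵢ ρⱼ = ρᵢ² B⁻¹ ρᵢ⁻¹. -/
/-- from ρᵢ ρⱼ ρᵢ⁻¹ = ρⱼ⁻¹ B⁻¹ ρⱼ² and ρᵢ B ρᵢ⁻¹ = ρⱼ⁻¹ B⁻¹ ρⱼ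
it follows that ρⱼ⁻¹ ρᵢ ρⱼ = ρᵢ² B⁻¹ ρᵢ⁻¹. -/
theorem stmt_11 (G : Type*) [Group G] (ρi ρj B : G)
    (h1 : ρi * ρj * ρi⁻¹ = ρj⁻¹ * B⁻¹ * ρj ^ 2)
    (h2 : ρi * B * ρi⁻¹ = ρj⁻¹ * B⁻¹ * ρj) :
    ρj⁻¹ * ρi * ρj = ρi ^ 2 * B⁻¹ * ρi⁻¹ := by
  have h3 : ρi * ρj * ρi⁻¹ = ρi * B * ρi⁻¹ * ρj := by
    rw [h1, h2]; simp [pow_two, mul_assoc]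
  have key : ρj * ρi = ρi * B⁻¹ * ρj := by
    have := congrArg (fun x => ρi * B⁻¹ * ρi⁻¹ * x * ρi) h3
    simpa [mul_assoc] using this.symm
  have key2 : ρi⁻¹ * ρj = B⁻¹ * ρj * ρi⁻¹ := by
    have := congrArg (fun x => ρi⁻¹ * x * ρi⁻¹) key
    simpa [mul_assoc] using this
  have g : ρj⁻¹ * ρi⁻¹ * ρj = ρi * B * (ρi⁻¹ * ρi⁻¹) := by
    calc ρj⁻¹ * ρi⁻¹ * ρj = ρj⁻¹ * (ρi⁻¹ * ρj) := by rw [mul_assoc]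
    _ = ρj⁻¹ * (B⁻¹ * ρj * ρi⁻¹) := by rw [key2]
    _ = (ρj⁻¹ * B⁻¹ * ρj) * ρi⁻¹ := by group
    _ = (ρi * B * ρi⁻¹) * ρi⁻¹ := by rw [h2]
    _ = ρi * B * (ρi⁻¹ * ρi⁻¹) := by group
  have := congrArg (fun x => x⁻¹) g
  simp only [mul_inv_rev, inv_inv] at this
  calc ρj⁻¹ * ρi * ρj = (ρj⁻¹ * ρi⁻¹ * ρj)⁻¹ * (ρj⁻¹ * ρj) := by group
  _ = ρi ^ 2 * B⁻¹ * ρi⁻¹ := by rw [g]; group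
end
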